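/- arXiv:2402.02802 — 8 statements merged into one kernel-verified Lean document; each statement's English description precedes it below -/
import Mathlib

section
/- Let (y,z) be a problem and let R^δ(y,z) = δ·R^L(y,z) + (1−δ)·R^F(y,z) for δ ∈ [0,1]. If the number of agents i with y_i < Y/n is strictly more than n/2, then R^F(y,z) = R^0(y,z) is the unique majority winner: for every δ ∈ (0,1], the set of agents i with R^0_i(y,z) > R^δ_i(y,z) has size strictly greater than n/2. (Proposition 1(i).) -/
open Finset

/-- Proposition 1(i): if a majority of agents have income below
the mean, then full redistribution is the unique majority winner among the
compromises between laissez faire and full redistribution. -/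
theorem stmt10 (n : ℕ) (y z : Fin n → ℝ) (hz : ∀ i, 0 ≤ z i)
    (hmaj : ({i : Fin n | y i < (∑ j, y j) / n}).ncard * 2 > n) :
    ∀ d : ℝ, 0 < d → d ≤ 1 →
      ({i : Fin n | (0 : ℝ) * y i + (1 - 0) * ((∑ j, y j) / n) >
          d * y i + (1 - d) * ((∑ j, y j) / n)}).ncard * 2 > n := by
  intro d hd _
  convert hmaj using 3
  ext i
  simp only [Set.mem_setOf_eq]
  constructor
  · intro h; nlinarith
  · intro h; nlinarith
end

section
/- Let (y,z) be a problem and R^δ(y,z) = δ·R^L(y,z) + (1−δ)·R^F(y,z) for δ ∈ [0,1]. If at most n/2 agents satisfy y_i < Y/n and at most n/2 agents satisfy y_i > Y/n, then for every δ ∈ [0,1], R^δ(y,z) is a majority winner: there is no δ' ∈ [0,1] such that R^{δ'}_i(y,z) > R^δ_i(y,z) holds for strictly more than n/2 agents. (Proposition 1(iii).) -/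
open Finset

/-- Proposition 1(iii): if neither those below nor those above
the mean income form a majority, then every compromise between laissez faire
and full redistribution is a majority winner. -/
theorem stmt11 (n : ℕ) (y z : Fin n → ℝ) (hz : ∀ i, 0 ≤ z i)
    (hl : ({i : Fin n | y i < (∑ j, y j) / n}).ncard * 2 ≤ n)
    (hu : ({i : Fin n | y i > (∑ j, y j) / n}).ncard * 2 ≤ n) :
    ∀ d : ℝ, 0 ≤ d → d ≤ 1 →
      ¬ ∃ d' : ℝ, 0 ≤ d' ∧ d' ≤ 1 ∧
        ({i : Fin n | d' * y i + (1 - d') * ((∑ j, y j) / n) >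
            d * y i + (1 - d) * ((∑ j, y j) / n)}).ncard * 2 > n := by
  intro d hd0 hd1
  rintro ⟨d', hd'0, hd'1, h⟩
  set m := (∑ j, y j) / n with hm
  rcases lt_trichotomy d' d with hc | hc | hc
  · have heq : {i : Fin n | d' * y i + (1 - d') * m > d * y i + (1 - d) * m}
        = {i : Fin n | y i < m} := by
      ext i
      simp only [Set.mem_setOf_eq]
      constructor
      · intro hi; nlinarith
      · intro hi; nlinarith
    rw [heq] at h; omega
  · have heq : {i : Fin n | d' * y i + (1 - d') * m > d * y i + (1 - d) * m}
        = (∅ : Set (Fin n)) := by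
      ext i
      simp only [Set.mem_setOf_eq, Set.mem_empty_iff_false, iff_false]
      intro hi; rw [hc] at hi; linarith
    rw [heq, Set.ncard_empty] at h; omega
  · have heq : {i : Fin n | d' * y i + (1 - d') * m > d * y i + (1 - d) * m}
        = {i : Fin n | y i > m} := by
      ext i
      simp only [Set.mem_setOf_eq]
      constructor
      · intro hi; nlinarith
      · intro hi; nlinarith
    rw [heq] at h; omega
end

section
/- Let (y,z) be a problem and R^δ(y,z) = δ·R^L(y,z) + (1−δ)·R^A(y,z) for δ ∈ [0,1]. If the number of agents i with y_i − z_i > (Y−Z)/n is strictly more than n/2, then R^L(y,z) = R^1(y,z) is the unique majority winner among {R^δ(y,z)}_{δ∈[0,1]}. (Proposition 2(ii).) -/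
open Finset

/-- Proposition 2(ii): if agents with net income above the
net-average form a majority, then laissez faire is the unique majority winner
among the compromises between laissez faire and need-adjusted full
redistribution. -/
theorem stmt12 (n : ℕ) (y z : Fin n → ℝ) (hz : ∀ i, 0 ≤ z i)
    (R : ℝ → Fin n → ℝ)
    (hRdef : ∀ d : ℝ, ∀ i, R d i =
      d * y i + (1 - d) * (z i + ((∑ j, y j) - (∑ j, z j)) / n))
    (hmaj : ({i : Fin n |
      y i - z i > ((∑ j, y j) - (∑ j, z j)) / n}).ncard * 2 > n) :
    -- R^1 = laissez faire is a majority winner ...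
    (¬ ∃ d' : ℝ, 0 ≤ d' ∧ d' ≤ 1 ∧
        ({i : Fin n | R d' i > R 1 i}).ncard * 2 > n) ∧
    -- ... and it is unique: any other member of the family yielding a
    -- different allocation is not a majority winner
    (∀ d : ℝ, 0 ≤ d → d ≤ 1 → R d ≠ R 1 →
      ∃ d' : ℝ, 0 ≤ d' ∧ d' ≤ 1 ∧
        ({i : Fin n | R d' i > R d i}).ncard * 2 > n) := by
  set A := ((∑ j, y j) - (∑ j, z j)) / (n : ℝ) with hA
  set S : Set (Fin n) := {i | y i - z i > A} with hS
  constructor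
  · rintro ⟨d', hd0, hd1, hcard⟩
    have hsub : {i : Fin n | R d' i > R 1 i} ⊆ Sᶜ := by
      intro i hi
      simp only [Set.mem_setOf_eq, hRdef] at hi
      simp only [Set.mem_compl_iff, hS, Set.mem_setOf_eq, not_lt]
      nlinarith [hi]
    have h1 : ({i : Fin n | R d' i > R 1 i}).ncard ≤ Sᶜ.ncard :=
      Set.ncard_le_ncard hsub (Set.toFinite _)
    have h2 : S.ncard + Sᶜ.ncard = n := by
      rw [Set.ncard_add_ncard_compl]; simp
    omega
  · intro d hd0 hd1 hne
    have hdlt : d < 1 := by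
      rcases lt_or_eq_of_le hd1 with h | h
      · exact h
      · exact absurd (funext fun i => by rw [hRdef, hRdef, h]) hne
    refine ⟨1, zero_le_one, le_refl 1, ?_⟩
    have heq : {i : Fin n | R 1 i > R d i} = S := by
      ext i
      simp only [Set.mem_setOf_eq, hRdef, hS]
      constructor
      · intro h; nlinarith
      · intro h; nlinarith
    rw [heq]; exact hmaj
end

section
/- Let (y,z) be a problem and R^δ(y,z) = δ·R^F(y,z) + (1−δ)·R^A(y,z) for δ ∈ [0,1]. If the number of agents i with z_i > Z/n is strictly more than n/2, then R^A(y,z) = R^0(y,z) is the unique majority winner among {R^δ(y,z)}_{δ∈[0,1]}. (Proposition 3(ii).) -/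
open Finset

/-- Proposition 3(ii): if agents with needs above the mean need
form a majority, then need-adjusted full redistribution is the unique majority
winner among the compromises between full redistribution and need-adjusted
full redistribution. -/
theorem stmt13 (n : ℕ) (y z : Fin n → ℝ) (hz : ∀ i, 0 ≤ z i)
    (R : ℝ → Fin n → ℝ)
    (hRdef : ∀ d : ℝ, ∀ i, R d i =
      d * ((∑ j, y j) / n) + (1 - d) * (z i + ((∑ j, y j) - (∑ j, z j)) / n))
    (hmaj : ({i : Fin n | z i > (∑ j, z j) / n}).ncard * 2 > n) :
    -- R^0 = need-adjusted full redistribution is a majority winner ...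
    (¬ ∃ d' : ℝ, 0 ≤ d' ∧ d' ≤ 1 ∧
        ({i : Fin n | R d' i > R 0 i}).ncard * 2 > n) ∧
    -- ... and it is unique
    (∀ d : ℝ, 0 ≤ d → d ≤ 1 → R d ≠ R 0 →
      ∃ d' : ℝ, 0 ≤ d' ∧ d' ≤ 1 ∧
        ({i : Fin n | R d' i > R d i}).ncard * 2 > n) := by
  have key : ∀ d d' : ℝ, ∀ i, R d i - R d' i = (d' - d) * (z i - (∑ j, z j) / n) := by
    intro d d' i
    rw [hRdef, hRdef]
    ring
  set S := {i : Fin n | z i > (∑ j, z j) / n} with hS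
  constructor
  · rintro ⟨d', h0, h1, hcard⟩
    set T := {i : Fin n | R d' i > R 0 i} with hT
    have hdisj : Disjoint S T := by
      rw [Set.disjoint_left]
      intro i hiS hiT
      have h := key d' 0 i
      have h2 : R d' i - R 0 i > 0 := sub_pos.mpr hiT
      have hiS' : z i > (∑ j, z j) / n := hiS
      nlinarith
    have hunion : (S ∪ T).ncard = S.ncard + T.ncard :=
      Set.ncard_union_eq hdisj (Set.toFinite S) (Set.toFinite T)
    have hle : (S ∪ T).ncard ≤ n := by
      have := Set.ncard_le_ncard (Set.subset_univ (S ∪ T)) Set.finite_univ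
      simpa [Set.ncard_univ] using this
    omega
  · intro d hd0 hd1 hne
    have hd : d ≠ 0 := by
      intro h
      apply hne
      funext i
      have h2 : R d i - R 0 i = 0 := by rw [key d 0 i, h]; ring
      linarith
    have hdpos : 0 < d := lt_of_le_of_ne hd0 (Ne.symm hd)
    refine ⟨0, le_refl 0, zero_le_one, ?_⟩
    have hsub : S ⊆ {i : Fin n | R 0 i > R d i} := by
      intro i hiS
      have h := key 0 d i
      have hiS' : z i > (∑ j, z j) / n := hiS
      have : R 0 i - R d i > 0 := by nlinarith
      exact lt_of_sub_pos this
    have := Set.ncard_le_ncard hsub (Set.toFinite _)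
    omega
end

section
/- For vectors in ℝ^n with equal total sum, ordered by Lorenz dominance via partial sums of increasingly sorted coordinates: for any problem (y,z) and 0 ≤ δ ≤ δ̄ ≤ 1, the allocation δ·y + (1−δ)·(Y/n,…,Y/n) Lorenz dominates the allocation δ̄·y + (1−δ̄)·(Y/n,…,Y/n). Concretely, if y is sorted increasingly (y_1 ≤ … ≤ y_n), then for every k ∈ {1,…,n}, Σ_{i=1}^k [δ(y_i − Y/n) + Y/n] ≥ Σ_{i=1}^k [δ̄(y_i − Y/n) + Y/n]. (Proposition 4(a).) -/
open Finset

lemma key_ineq (n k : ℕ) (y : ℕ → ℝ)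
    (hsort : ∀ i j : ℕ, i ≤ j → j < n → y i ≤ y j)
    (hk1 : 1 ≤ k) (hkn : k ≤ n) :
    (n : ℝ) * ∑ i ∈ Finset.range k, y i ≤ (k : ℝ) * ∑ i ∈ Finset.range n, y i := by
  have hsplit : ∑ i ∈ Finset.range n, y i
      = (∑ i ∈ Finset.range k, y i) + ∑ i ∈ Finset.Ico k n, y i := by
    rw [← Finset.sum_range_add_sum_Ico _ hkn]
  have hhead : ∑ i ∈ Finset.range k, y i ≤ (k : ℝ) * y (k - 1) := by
    calc ∑ i ∈ Finset.range k, y i ≤ ∑ _i ∈ Finset.range k, y (k - 1) := by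
          apply Finset.sum_le_sum
          intro i hi
          simp only [Finset.mem_range] at hi
          exact hsort i (k - 1) (by omega) (by omega)
      _ = (k : ℝ) * y (k - 1) := by simp [mul_comm]
  have htail : ((n : ℝ) - k) * y (k - 1) ≤ ∑ i ∈ Finset.Ico k n, y i := by
    calc ((n : ℝ) - k) * y (k - 1)
        = ∑ _i ∈ Finset.Ico k n, y (k - 1) := by
          rw [Finset.sum_const, Nat.card_Ico, nsmul_eq_mul]
          congr 1
          push_cast [Nat.cast_sub hkn]
          ring
      _ ≤ ∑ i ∈ Finset.Ico k n, y i := by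
          apply Finset.sum_le_sum
          intro i hi
          simp only [Finset.mem_Ico] at hi
          exact hsort (k - 1) i (by omega) hi.2
  have hk' : (0:ℝ) ≤ (k:ℝ) := by positivity
  have hnk : (0:ℝ) ≤ (n:ℝ) - k := by
    have : (k:ℝ) ≤ n := by exact_mod_cast hkn
    linarith
  nlinarith [mul_le_mul_of_nonneg_left htail hk',
    mul_le_mul_of_nonneg_left hhead hnk]

/-- Proposition 4(a): for sorted incomes, a smaller weight on
laissez faire Lorenz dominates a bigger one, via partial sums. -/
theorem stmt14 (n : ℕ) (y : ℕ → ℝ)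
    (hsort : ∀ i j : ℕ, i ≤ j → j < n → y i ≤ y j)
    (d dbar : ℝ) (h0 : 0 ≤ d) (hdd : d ≤ dbar) (h1 : dbar ≤ 1) :
    ∀ k : ℕ, 1 ≤ k → k ≤ n →
      (∑ i ∈ Finset.range k,
          (d * (y i - (∑ j ∈ Finset.range n, y j) / n) +
            (∑ j ∈ Finset.range n, y j) / n)) ≥
      (∑ i ∈ Finset.range k,
          (dbar * (y i - (∑ j ∈ Finset.range n, y j) / n) +
            (∑ j ∈ Finset.range n, y j) / n)) := by
  intro k hk1 hkn
  have hn : 0 < n := lt_of_lt_of_le hk1 hkn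
  have hn' : (0:ℝ) < n := by exact_mod_cast hn
  set Y := ∑ j ∈ Finset.range n, y j with hY
  have hkey := key_ineq n k y hsort hk1 hkn
  have hS : ∑ i ∈ Finset.range k, (y i - Y / n) ≤ 0 := by
    rw [Finset.sum_sub_distrib, Finset.sum_const, Finset.card_range, nsmul_eq_mul]
    rw [sub_nonpos, mul_div_assoc', le_div_iff₀ hn']
    linarith [hkey]
  have e1 : ∀ c : ℝ, ∑ i ∈ Finset.range k, (c * (y i - Y / n) + Y / n)
      = c * (∑ i ∈ Finset.range k, (y i - Y / n)) + k * (Y / n) := by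
    intro c
    rw [Finset.sum_add_distrib, ← Finset.mul_sum, Finset.sum_const, Finset.card_range,
      nsmul_eq_mul]
  rw [ge_iff_le, e1, e1]
  have : dbar * (∑ i ∈ Finset.range k, (y i - Y / n)) ≤
      d * (∑ i ∈ Finset.range k, (y i - Y / n)) :=
    mul_le_mul_of_nonpos_right hdd hS
  linarith
end

section
/- For any problem (y,z) with z sorted increasingly (z_1 ≤ … ≤ z_n), and any 0 ≤ δ ≤ δ̄ ≤ 1, the allocation given by R^{δ̄}_i = δ̄·Y/n + (1−δ̄)·(z_i + (Y−Z)/n) Lorenz dominates R^δ_i = δ·Y/n + (1−δ)·(z_i + (Y−Z)/n): for every k ∈ {1,…,n}, Σ_{i=1}^k R^{δ̄}_i ≥ Σ_{i=1}^k R^δ_i. (Proposition 4(b).) -/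
open Finset

lemma key15 (n k : ℕ) (z : ℕ → ℝ)
    (hsort : ∀ i j : ℕ, i ≤ j → j < n → z i ≤ z j)
    (hk1 : 1 ≤ k) (hkn : k ≤ n) :
    (n : ℝ) * ∑ i ∈ Finset.range k, z i ≤ (k : ℝ) * ∑ i ∈ Finset.range n, z i := by
  have hsplit : ∑ i ∈ Finset.range n, z i
      = ∑ i ∈ Finset.range k, z i + ∑ i ∈ Finset.Ico k n, z i := by
    rw [← Finset.sum_range_add_sum_Ico _ hkn]
  have h1 : ∑ i ∈ Finset.range k, z i ≤ (k : ℝ) * z (k - 1) := by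
    calc ∑ i ∈ Finset.range k, z i ≤ ∑ _i ∈ Finset.range k, z (k - 1) := by
          apply Finset.sum_le_sum
          intro i hi
          exact hsort i (k - 1) (Nat.le_sub_one_of_lt (Finset.mem_range.mp hi))
            (lt_of_lt_of_le (Nat.sub_lt hk1 one_pos) hkn)
      _ = (k : ℝ) * z (k - 1) := by simp [mul_comm]
  have h2 : ((n : ℝ) - k) * z (k - 1) ≤ ∑ i ∈ Finset.Ico k n, z i := by
    calc ((n : ℝ) - k) * z (k - 1) = ∑ _i ∈ Finset.Ico k n, z (k - 1) := by
          rw [Finset.sum_const, Nat.card_Ico, nsmul_eq_mul, Nat.cast_sub hkn]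
      _ ≤ ∑ i ∈ Finset.Ico k n, z i := by
          apply Finset.sum_le_sum
          intro i hi
          exact hsort (k - 1) i (le_trans (Nat.sub_le k 1) (Finset.mem_Ico.mp hi).1)
            (Finset.mem_Ico.mp hi).2
  have hnk : (k : ℝ) ≤ n := Nat.cast_le.mpr hkn
  have hk0 : (0 : ℝ) ≤ k := Nat.cast_nonneg k
  nlinarith [mul_le_mul_of_nonneg_left h2 hk0,
    mul_le_mul_of_nonneg_left h1 (sub_nonneg.mpr hnk)]

/-- Proposition 4(b): for sorted needs, a bigger weight on full
redistribution Lorenz dominates a smaller one, via partial sums. -/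
theorem stmt15 (n : ℕ) (y z : ℕ → ℝ) (hz : ∀ i, i < n → 0 ≤ z i)
    (hsort : ∀ i j : ℕ, i ≤ j → j < n → z i ≤ z j)
    (d dbar : ℝ) (h0 : 0 ≤ d) (hdd : d ≤ dbar) (h1 : dbar ≤ 1) :
    ∀ k : ℕ, 1 ≤ k → k ≤ n →
      (∑ i ∈ Finset.range k,
          (dbar * ((∑ j ∈ Finset.range n, y j) / n) + (1 - dbar) *
            (z i + ((∑ j ∈ Finset.range n, y j) - (∑ j ∈ Finset.range n, z j)) / n))) ≥
      (∑ i ∈ Finset.range k,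
          (d * ((∑ j ∈ Finset.range n, y j) / n) + (1 - d) *
            (z i + ((∑ j ∈ Finset.range n, y j) - (∑ j ∈ Finset.range n, z j)) / n))) := by
  intro k hk1 hkn
  set Y := ∑ j ∈ Finset.range n, y j
  set Z := ∑ j ∈ Finset.range n, z j
  set S := ∑ i ∈ Finset.range k, z i with hS
  have hkey : (n : ℝ) * S ≤ (k : ℝ) * Z := key15 n k z hsort hk1 hkn
  have hn0 : (0 : ℝ) < n := by
    have : 1 ≤ n := le_trans hk1 hkn
    exact_mod_cast Nat.pos_of_ne_zero (by omega)
  have expand : ∀ δ : ℝ, ∑ i ∈ Finset.range k,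
      (δ * (Y / n) + (1 - δ) * (z i + (Y - Z) / n))
      = (k : ℝ) * (δ * (Y / n) + (1 - δ) * ((Y - Z) / n)) + (1 - δ) * S := by
    intro δ
    rw [hS]
    simp only [mul_add, Finset.sum_add_distrib, Finset.mul_sum, Finset.sum_const,
      Finset.card_range, nsmul_eq_mul]
    ring
  rw [ge_iff_le, expand, expand]
  have hne : (n : ℝ) ≠ 0 := ne_of_gt hn0
  rw [div_eq_mul_inv, div_eq_mul_inv]
  have hinv : (0 : ℝ) < (n : ℝ)⁻¹ := inv_pos.mpr hn0
  have hS2 : S ≤ (k : ℝ) * Z * (n : ℝ)⁻¹ := by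
    rw [← div_eq_mul_inv, le_div_iff₀ hn0]
    linarith [hkey]
  nlinarith [mul_le_mul_of_nonneg_left hS2 (sub_nonneg.mpr hdd)]
end

section
/- Let n = 3, y = (2,2,10), z = (1,4,0), and for δ ∈ [0,1] define R^δ(y,z) = δ·y + (1−δ)·R^A(y,z) where R^A(y,z) = (4,7,3). Then neither R^{1/3}(y,z) Lorenz dominates R^{1/10}(y,z) nor R^{1/10}(y,z) Lorenz dominates R^{1/3}(y,z). Specifically, R^{1/3}(y,z) = (10/3, 16/3, 16/3) and R^{1/10}(y,z) = (38/10, 65/10, 37/10); the minimum coordinate of R^{1/3} is 10/3 < 37/10, while the sum of the two smallest coordinates of R^{1/3} is 26/3 > 75/10. (Proposition 5.) -/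
open Finset

/-- Sum of the single smallest coordinate of a vector in ℝ³. -/
noncomputable def min3 (x : Fin 3 → ℝ) : ℝ := min (min (x 0) (x 1)) (x 2)

/-- Sum of the two smallest coordinates of a vector in ℝ³ (total minus max). -/
noncomputable def sum2min (x : Fin 3 → ℝ) : ℝ :=
  (x 0 + x 1 + x 2) - max (max (x 0) (x 1)) (x 2)

/-- Lorenz dominance on ℝ³ (for vectors with equal totals): the partial sums of
the k smallest coordinates, k = 1, 2, are at least as large. -/
def lorenzDom3 (x xbar : Fin 3 → ℝ) : Prop :=
  min3 x ≥ min3 xbar ∧ sum2min x ≥ sum2min xbar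

/-- Proposition 5: with y = (2,2,10), z = (1,4,0), the family
δ·R^L + (1−δ)·R^A is not ranked by Lorenz dominance: the allocations for
δ = 1/3 and δ = 1/10 are incomparable. -/
theorem stmt16
    (R : ℝ → Fin 3 → ℝ)
    (hRdef : ∀ d : ℝ, ∀ i, R d i =
      d * (![2, 2, 10] : Fin 3 → ℝ) i + (1 - d) * (![4, 7, 3] : Fin 3 → ℝ) i) :
    R (1/3) = ![10/3, 16/3, 16/3] ∧
    R (1/10) = ![38/10, 65/10, 37/10] ∧
    ¬ lorenzDom3 (R (1/3)) (R (1/10)) ∧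
    ¬ lorenzDom3 (R (1/10)) (R (1/3)) := by
  have h1 : R (1/3) = ![10/3, 16/3, 16/3] := by
    funext i; fin_cases i <;> simp [hRdef] <;> norm_num
  have h2 : R (1/10) = ![38/10, 65/10, 37/10] := by
    funext i; fin_cases i <;> simp [hRdef] <;> norm_num
  refine ⟨h1, h2, ?_, ?_⟩
  · rw [h1, h2]; rintro ⟨ha, -⟩
    simp [min3] at ha; norm_num at ha
  · rw [h1, h2]; rintro ⟨-, hb⟩
    simp [sum2min] at hb; norm_num at hb
end

section
/- Let R be a rule satisfying equal treatment of equals and additivity. Suppose α_k = R_k(e_k, 0) for each k ∈ {1,…,n} with n ≥ 2, and by equal treatment of equals R_i(e_k, 0) = (1−α_k)/(n−1) for i ≠ k. Then α_1 = α_2 = … = α_n. (Key step in the proof of Theorem 1.) -/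
open Finset

/-- key step in Theorem 1: under equal treatment of equals and
additivity, the diagonal coefficients α_k on the spanning problems (e_k, 0)
all coincide. -/
theorem stmt19 (n : ℕ) (hn : 2 ≤ n)
    (R : (Fin n → ℝ) → (Fin n → ℝ) → Fin n → ℝ)
    -- equal treatment of equals
    (hete : ∀ y z : Fin n → ℝ, (∀ i, 0 ≤ z i) → ∀ i j : Fin n,
      y i = y j → z i = z j → R y z i = R y z j)
    -- additivity
    (hadd : ∀ y y' z z' : Fin n → ℝ, (∀ i, 0 ≤ z i) → (∀ i, 0 ≤ z' i) →
      R (y + y') (z + z') = R y z + R y' z')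
    (α : Fin n → ℝ)
    (hα : ∀ k i : Fin n, R (Pi.single k 1) 0 i =
      if i = k then α k else (1 - α k) / (n - 1)) :
    ∀ k l : Fin n, α k = α l := by
  intro k l
  rcases eq_or_ne k l with rfl | hkl
  · rfl
  have hz : ∀ i : Fin n, (0 : ℝ) ≤ (0 : Fin n → ℝ) i := fun _ => le_refl 0
  have hA := hadd (Pi.single k 1) (Pi.single l 1) 0 0 hz hz
  have hy : (Pi.single k 1 + Pi.single l 1 : Fin n → ℝ) k
      = (Pi.single k 1 + Pi.single l 1 : Fin n → ℝ) l := by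
    simp [Pi.single_apply, hkl, hkl.symm]
  have hE := hete (Pi.single k 1 + Pi.single l 1) (0 + 0) (fun i => by simp)
    k l hy rfl
  rw [hA] at hE
  simp only [Pi.add_apply, hα] at hE
  rw [if_pos trivial, if_pos trivial, if_neg hkl, if_neg hkl.symm] at hE
  have hn1 : (1 : ℝ) ≤ (n : ℝ) - 1 := by
    have : (2 : ℝ) ≤ (n : ℝ) := by exact_mod_cast hn
    linarith
  have hne : (n : ℝ) - 1 ≠ 0 := by linarith
  field_simp at hE
  nlinarith [hE, hn1, sq_nonneg (α k - α l)]
end
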